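/- arXiv:gr-qc/0602015 — 3 statements merged into one kernel-verified Lean document; each statement's English description precedes it below -/
import Mathlib

section
/- A proper-time parametrized curve (u(τ), v(τ)) in the metric m(u,v) du dv is a geodesic if and only if ü/u̇ + (ln m),_u (u,v) · u̇ = 0 together with the unit condition m(u(τ),v(τ)) u̇ v̇ = 1. -/
/-- A proper-time parametrized curve (u(τ),v(τ)) in the metric m(u,v) du dv
is a geodesic (both geodesic equations hold) iff ü/u̇ + (ln m),_u u̇ = 0:
given the unit condition, the second geodesic equation follows from the
first. -/
theorem geodesic_iff_first_equation (m : ℝ → ℝ → ℝ) (u v : ℝ → ℝ)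
    (hm : ContDiff ℝ (⊤ : ℕ∞) (fun p : ℝ × ℝ => m p.1 p.2)) (hpos : ∀ x y, 0 < m x y)
    (hu : ContDiff ℝ (⊤ : ℕ∞) u) (hv : ContDiff ℝ (⊤ : ℕ∞) v)
    (hu' : ∀ τ, 0 < deriv u τ) (hv' : ∀ τ, 0 < deriv v τ)
    (hunit : ∀ τ, m (u τ) (v τ) * deriv u τ * deriv v τ = 1) :
    (∀ τ, deriv (deriv u) τ
            + deriv (fun x => Real.log (m x (v τ))) (u τ) * (deriv u τ) ^ 2 = 0
        ∧ deriv (deriv v) τ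
            + deriv (fun y => Real.log (m (u τ) y)) (v τ) * (deriv v τ) ^ 2 = 0)
      ↔ (∀ τ, deriv (deriv u) τ / deriv u τ
            + deriv (fun x => Real.log (m x (v τ))) (u τ) * deriv u τ = 0) := by
  set F : ℝ × ℝ → ℝ := fun p => m p.1 p.2 with hF
  have hFd : ∀ p, HasFDerivAt F (fderiv ℝ F p) p :=
    fun p => (hm.differentiable (by simp) p).hasFDerivAt
  set P1 : ℝ → ℝ := fun τ => fderiv ℝ F (u τ, v τ) (1, 0) with hP1
  set P2 : ℝ → ℝ := fun τ => fderiv ℝ F (u τ, v τ) (0, 1) with hP2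
  have hud : ∀ τ, HasDerivAt u (deriv u τ) τ :=
    fun τ => (hu.differentiable (by simp) τ).hasDerivAt
  have hvd : ∀ τ, HasDerivAt v (deriv v τ) τ :=
    fun τ => (hv.differentiable (by simp) τ).hasDerivAt
  have hud2 : ∀ τ, HasDerivAt (deriv u) (deriv (deriv u) τ) τ :=
    fun τ => ((contDiff_infty_iff_deriv.mp (hu.of_le (by simp))).2.differentiable (by simp) τ).hasDerivAt
  have hvd2 : ∀ τ, HasDerivAt (deriv v) (deriv (deriv v) τ) τ :=
    fun τ => ((contDiff_infty_iff_deriv.mp (hv.of_le (by simp))).2.differentiable (by simp) τ).hasDerivAt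
  -- log derivatives
  have hne : ∀ τ, m (u τ) (v τ) ≠ 0 := fun τ => (hpos _ _).ne'
  have hlog1 : ∀ τ, deriv (fun x => Real.log (m x (v τ))) (u τ)
      = P1 τ / m (u τ) (v τ) := by
    intro τ
    have h1 : HasDerivAt (fun x => m x (v τ)) (P1 τ) (u τ) := by
      have := (hFd (u τ, v τ)).comp_hasDerivAt (u τ)
        ((hasDerivAt_id (u τ)).prodMk (hasDerivAt_const (u τ) (v τ)))
      exact this
    exact (h1.log (hne τ)).deriv
  have hlog2 : ∀ τ, deriv (fun y => Real.log (m (u τ) y)) (v τ)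
      = P2 τ / m (u τ) (v τ) := by
    intro τ
    have h1 : HasDerivAt (fun y => m (u τ) y) (P2 τ) (v τ) := by
      have := (hFd (u τ, v τ)).comp_hasDerivAt (v τ)
        ((hasDerivAt_const (v τ) (u τ)).prodMk (hasDerivAt_id (v τ)))
      exact this
    exact (h1.log (hne τ)).deriv
  -- derivative of the unit condition
  have hkey : ∀ τ, ((deriv u τ * P1 τ + deriv v τ * P2 τ) * deriv u τ
        + m (u τ) (v τ) * deriv (deriv u) τ) * deriv v τ
        + m (u τ) (v τ) * deriv u τ * deriv (deriv v) τ = 0 := by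
    intro τ
    have hM : HasDerivAt (fun t => m (u t) (v t))
        (deriv u τ * P1 τ + deriv v τ * P2 τ) τ := by
      have hc := (hFd (u τ, v τ)).comp_hasDerivAt τ ((hud τ).prodMk (hvd τ))
      have hlin : (fderiv ℝ F (u τ, v τ)) (deriv u τ, deriv v τ)
          = deriv u τ * P1 τ + deriv v τ * P2 τ := by
        have h2 : (deriv u τ, deriv v τ)
            = deriv u τ • ((1:ℝ), (0:ℝ)) + deriv v τ • ((0:ℝ), (1:ℝ)) := by
          simp [Prod.ext_iff]
        rw [h2, map_add, map_smul, map_smul, hP1, hP2, smul_eq_mul, smul_eq_mul]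
      rwa [hlin] at hc
    have hprod : HasDerivAt (fun t => m (u t) (v t) * deriv u t * deriv v t)
        (((deriv u τ * P1 τ + deriv v τ * P2 τ) * deriv u τ
          + m (u τ) (v τ) * deriv (deriv u) τ) * deriv v τ
          + m (u τ) (v τ) * deriv u τ * deriv (deriv v) τ) τ :=
      (hM.mul (hud2 τ)).mul (hvd2 τ)
    have heq : (fun t => m (u t) (v t) * deriv u t * deriv v t) = fun _ => (1:ℝ) :=
      funext hunit
    rw [heq] at hprod
    exact hprod.unique (hasDerivAt_const τ 1)
  constructor
  · intro H τ
    have h := (H τ).1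
    rw [hlog1] at h ⊢
    have hu0 : deriv u τ ≠ 0 := (hu' τ).ne'
    have ha0 : m (u τ) (v τ) ≠ 0 := hne τ
    field_simp at h ⊢
    linarith
  · intro H τ
    have h := H τ
    rw [hlog1] at h
    have hu0 : deriv u τ ≠ 0 := (hu' τ).ne'
    have hv0 : deriv v τ ≠ 0 := (hv' τ).ne'
    have ha0 : m (u τ) (v τ) ≠ 0 := hne τ
    have e1 : m (u τ) (v τ) * deriv (deriv u) τ + P1 τ * deriv u τ ^ 2 = 0 := by
      field_simp at h
      linarith
    constructor
    · rw [hlog1]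
      field_simp
      linarith
    · rw [hlog2]
      have e2 : deriv u τ * (m (u τ) (v τ) * deriv (deriv v) τ
          + P2 τ * deriv v τ ^ 2) = 0 := by
        have hk := hkey τ
        linear_combination hk - deriv v τ * e1
      have e3 : m (u τ) (v τ) * deriv (deriv v) τ + P2 τ * deriv v τ ^ 2 = 0 :=
        by rcases mul_eq_zero.mp e2 with h' | h'
           · exact absurd h' hu0
           · exact h'
      field_simp
      linarith
end

section
/- For two inertial emitters in flat 2D space-time with emission coordinates (τ¹, τ²) and transmitted times τ̄² = φ₁(τ¹), τ̄¹ = φ₂(τ²) (affine with slope 1/λ), the metric function λ is recovered from the emitter positioning data at any two distinct events P, Q by λ = √( (Δτ¹ Δτ²)/(Δτ̄¹ Δτ̄²) ), where Δ denotes the difference of values at P and Q. Hence ds² = √(Δτ¹Δτ²/(Δτ̄¹Δτ̄²)) dτ¹ dτ². -/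
/-- For two inertial emitters with metric ds² = λ dτ¹dτ² and affine
transmitted-time relations τ̄² = φ₁(τ¹) = τ¹/λ + τ²₀,
τ̄¹ = φ₂(τ²) = τ²/λ + τ¹₀, the metric function λ is recovered from the
emitter positioning data at two events P, Q:
λ = √((Δτ¹Δτ²)/(Δτ̄¹Δτ̄²)). -/
theorem metric_from_positioning_data (lam tau10 tau20 : ℝ) (hlam : 0 < lam)
    (φ₁ φ₂ : ℝ → ℝ)
    (hφ₁ : ∀ t, φ₁ t = t / lam + tau20) (hφ₂ : ∀ t, φ₂ t = t / lam + tau10)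
    (tau1P tau2P tau1Q tau2Q : ℝ)
    (h1 : tau1P ≠ tau1Q) (h2 : tau2P ≠ tau2Q) :
    lam = Real.sqrt (((tau1P - tau1Q) * (tau2P - tau2Q)) /
      ((φ₂ tau2P - φ₂ tau2Q) * (φ₁ tau1P - φ₁ tau1Q))) := by
  have hd1 : tau1P - tau1Q ≠ 0 := sub_ne_zero.mpr h1
  have hd2 : tau2P - tau2Q ≠ 0 := sub_ne_zero.mpr h2
  have hlne : lam ≠ 0 := hlam.ne'
  have key : ((tau1P - tau1Q) * (tau2P - tau2Q)) /
      ((φ₂ tau2P - φ₂ tau2Q) * (φ₁ tau1P - φ₁ tau1Q)) = lam ^ 2 := by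
    rw [hφ₁, hφ₁, hφ₂, hφ₂]
    have e : (tau2P / lam + tau10 - (tau2Q / lam + tau10)) * (tau1P / lam + tau20 - (tau1Q / lam + tau20))
        = (tau1P - tau1Q) * (tau2P - tau2Q) / lam ^ 2 := by ring
    rw [e, div_div_eq_mul_div, mul_div_cancel_left₀ (lam ^ 2) (mul_ne_zero hd1 hd2)]
  rw [key, Real.sqrt_sq hlam.le]
end

section
/- If a user's public data consist of affine transmitted-time relations τ̄² = τ¹/λ + τ²₀, τ̄¹ = τ²/λ + τ¹₀ (λ > 1) together with vanishing emitter accelerations α₁ ≡ α₂ ≡ 0, then the metric function equals λ along both emitter trajectories and its gradient vanishes there: m,₁ = m,₂ = 0 along both emitter world lines. -/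
/-- If the transmitted-time relations are affine, φ₁(τ¹) = τ¹/λ + τ²₀ and
φ₂(τ²) = τ²/λ + τ¹₀ with λ > 1, and the emitter acceleration scalars vanish
(α₁ = (ln m),₁(τ¹,φ₁(τ¹)) ≡ 0, α₂ = −(ln m),₂(φ₂(τ²),τ²) ≡ 0), then the
metric function equals λ along both emitter trajectories and its gradient
vanishes there. -/
theorem flat_looking_public_data (m : ℝ → ℝ → ℝ) (lam tau10 tau20 : ℝ)
    (hlam : 1 < lam)
    (hm : ContDiff ℝ (⊤ : ℕ∞) (fun p : ℝ × ℝ => m p.1 p.2)) (hpos : ∀ x y, 0 < m x y)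
    (φ₁ φ₂ : ℝ → ℝ)
    (hφ₁ : ∀ t, φ₁ t = t / lam + tau20) (hφ₂ : ∀ t, φ₂ t = t / lam + tau10)
    (hunit₁ : ∀ t, m t (φ₁ t) * deriv φ₁ t = 1)
    (hunit₂ : ∀ t, m (φ₂ t) t * deriv φ₂ t = 1)
    (hα₁ : ∀ t, deriv (fun x => Real.log (m x (φ₁ t))) t = 0)
    (hα₂ : ∀ t, deriv (fun y => Real.log (m (φ₂ t) y)) t = 0) :
    ∀ t, m t (φ₁ t) = lam ∧ m (φ₂ t) t = lam ∧
      deriv (fun x => m x (φ₁ t)) t = 0 ∧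
      deriv (fun y => m t y) (φ₁ t) = 0 ∧
      deriv (fun x => m x t) (φ₂ t) = 0 ∧
      deriv (fun y => m (φ₂ t) y) t = 0 := by
  have hlam0 : lam ≠ 0 := by linarith
  set M : ℝ × ℝ → ℝ := fun p => m p.1 p.2 with hM
  have hMd : Differentiable ℝ M := hm.differentiable (by simp)
  set L : ℝ × ℝ → (ℝ × ℝ) →L[ℝ] ℝ := fun p => fderiv ℝ M p with hL
  -- derivatives of φ₁, φ₂
  have hφ₁' : ∀ t, HasDerivAt φ₁ (1 / lam) t := by
    intro t
    have h : φ₁ = fun t => t / lam + tau20 := funext hφ₁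
    rw [h]
    simpa using ((hasDerivAt_id t).div_const lam).add_const tau20
  have hφ₂' : ∀ t, HasDerivAt φ₂ (1 / lam) t := by
    intro t
    have h : φ₂ = fun t => t / lam + tau10 := funext hφ₂
    rw [h]
    simpa using ((hasDerivAt_id t).div_const lam).add_const tau10
  -- partial derivatives as values of L
  have key1 : ∀ t c, HasDerivAt (fun x => m x c) (L (t, c) (1, 0)) t := by
    intro t c
    have hc : HasDerivAt (fun x : ℝ => (x, c)) ((1 : ℝ), (0 : ℝ)) t :=
      (hasDerivAt_id t).prodMk (hasDerivAt_const t c)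
    exact (hMd (t, c)).hasFDerivAt.comp_hasDerivAt t hc
  have key2 : ∀ t c, HasDerivAt (fun y => m t y) (L (t, c) (0, 1)) c := by
    intro t c
    have hc : HasDerivAt (fun y : ℝ => (t, y)) ((0 : ℝ), (1 : ℝ)) c :=
      (hasDerivAt_const c t).prodMk (hasDerivAt_id c)
    exact (hMd (t, c)).hasFDerivAt.comp_hasDerivAt c hc
  -- m = lam along trajectories
  have hc1 : ∀ t, m t (φ₁ t) = lam := by
    intro t
    have h := hunit₁ t
    rw [(hφ₁' t).deriv] at h
    field_simp at h
    linarith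
  have hc2 : ∀ t, m (φ₂ t) t = lam := by
    intro t
    have h := hunit₂ t
    rw [(hφ₂' t).deriv] at h
    field_simp at h
    linarith
  -- first partials vanish from α conditions
  have hp1 : ∀ t, L (t, φ₁ t) (1, 0) = 0 := by
    intro t
    have hlog : HasDerivAt (fun x => Real.log (m x (φ₁ t)))
        (L (t, φ₁ t) (1, 0) / m t (φ₁ t)) t :=
      (key1 t (φ₁ t)).log (ne_of_gt (hpos t (φ₁ t)))
    have h := hα₁ t
    rw [hlog.deriv] at h
    have hne : m t (φ₁ t) ≠ 0 := ne_of_gt (hpos t (φ₁ t))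
    field_simp at h
    simpa using h
  have hp2 : ∀ t, L (φ₂ t, t) (0, 1) = 0 := by
    intro t
    have hlog : HasDerivAt (fun y => Real.log (m (φ₂ t) y))
        (L (φ₂ t, t) (0, 1) / m (φ₂ t) t) t :=
      (key2 (φ₂ t) t).log (ne_of_gt (hpos (φ₂ t) t))
    have h := hα₂ t
    rw [hlog.deriv] at h
    have hne : m (φ₂ t) t ≠ 0 := ne_of_gt (hpos (φ₂ t) t)
    field_simp at h
    simpa using h
  -- derivative along trajectory 1 is zero
  have hcurve1 : ∀ t, HasDerivAt (fun s => m s (φ₁ s))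
      (L (t, φ₁ t) (1, 1 / lam)) t := by
    intro t
    have hc : HasDerivAt (fun s : ℝ => (s, φ₁ s)) ((1 : ℝ), 1 / lam) t :=
      (hasDerivAt_id t).prodMk (hφ₁' t)
    exact (hMd (t, φ₁ t)).hasFDerivAt.comp_hasDerivAt t hc
  have hcurve2 : ∀ t, HasDerivAt (fun s => m (φ₂ s) s)
      (L (φ₂ t, t) (1 / lam, 1)) t := by
    intro t
    have hc : HasDerivAt (fun s : ℝ => (φ₂ s, s)) ((1 / lam : ℝ), (1 : ℝ)) t :=
      (hφ₂' t).prodMk (hasDerivAt_id t)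
    exact HasFDerivAt.comp_hasDerivAt (f := fun s : ℝ => (φ₂ s, s)) t
      (hMd (φ₂ t, t)).hasFDerivAt hc
  have hz1 : ∀ t, L (t, φ₁ t) (1, 1 / lam) = 0 := by
    intro t
    have hconst : (fun s => m s (φ₁ s)) = fun _ => lam := funext hc1
    have h := hcurve1 t
    rw [hconst] at h
    exact h.unique (hasDerivAt_const t lam)
  have hz2 : ∀ t, L (φ₂ t, t) (1 / lam, 1) = 0 := by
    intro t
    have hconst : (fun s => m (φ₂ s) s) = fun _ => lam := funext hc2
    have h := hcurve2 t
    rw [hconst] at h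
    exact h.unique (hasDerivAt_const t lam)
  -- linearity split
  intro t
  refine ⟨hc1 t, hc2 t, ?_, ?_, ?_, ?_⟩
  · rw [(key1 t (φ₁ t)).deriv]; exact hp1 t
  · rw [(key2 t (φ₁ t)).deriv]
    have hsplit : ((1 : ℝ), (1 / lam : ℝ)) = (1, 0) + (1 / lam) • ((0 : ℝ), (1 : ℝ)) := by
      simp [Prod.ext_iff]
    have h := hz1 t
    rw [hsplit, map_add, map_smul, hp1 t, smul_eq_mul] at h
    have h1lam : (1 : ℝ) / lam ≠ 0 := by positivity
    have := h
    simp only [zero_add] at this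
    exact (mul_eq_zero.mp this).resolve_left h1lam
  · rw [(key1 (φ₂ t) t).deriv]
    have hsplit : ((1 / lam : ℝ), (1 : ℝ)) = (1 / lam) • ((1 : ℝ), (0 : ℝ)) + (0, 1) := by
      simp [Prod.ext_iff]
    have h := hz2 t
    rw [hsplit, map_add, map_smul, hp2 t, smul_eq_mul] at h
    have h1lam : (1 : ℝ) / lam ≠ 0 := by positivity
    simp only [add_zero] at h
    exact (mul_eq_zero.mp h).resolve_left h1lam
  · rw [(key2 (φ₂ t) t).deriv]; exact hp2 t
end
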